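/- Assume hypotheses H1, H2 and H3, and let φ ∈ X. Then the unique solution w* ∈ X⁺ of the fixed point equation w = F V(φ, w) belongs to H¹, and ‖w*‖_{H¹} ≤ ‖((I_{X⁺} − F V⁺)↾_{H¹})^{−1}‖_{H¹←H¹} · ‖F V⁻‖_{H¹←X} · ‖φ‖_X. -/

import Mathlib

open MeasureTheory Set Filter

noncomputable section

/-- `ℝ^d` with the Euclidean norm. -/
abbrev Evec (d : ℕ) := EuclideanSpace ℝ (Fin d)

/-- `ℝ^{d×d}`, identified with linear operators on `ℝ^d`, with a fixed norm. -/
abbrev Mtx (d : ℕ) := Evec d →L[ℝ] Evec d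

/-- The operator `F V⁺ : X⁺ → X⁺`: extension of `w` by `0` on `[−τ,0]` followed by `F`. -/
def FVp (d : ℕ) (τ s : ℝ) (C : ℝ → ℝ → Mtx d) (w : ℝ → Evec d) (t : ℝ) : Evec d :=
  ∫ θ in Set.Icc (-τ) (0:ℝ), (C (s+t) θ) (if 0 < t+θ then w (t+θ) else 0)

/-- The operator `F V⁻ : X → X⁺`: extension of `φ` by `0` on `(0,h]` followed by `F`. -/
def FVm (d : ℕ) (τ s : ℝ) (C : ℝ → ℝ → Mtx d) (φ : ℝ → Evec d) (t : ℝ) : Evec d :=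
  ∫ θ in Set.Icc (-τ) (0:ℝ), (C (s+t) θ) (if t+θ ≤ 0 then φ (t+θ) else 0)

/-- `F V(φ, w)`: the function equal to `φ` on `[−τ,0]` and `w` on `(0,h]`, followed by `F`. -/
def FV (d : ℕ) (τ s : ℝ) (C : ℝ → ℝ → Mtx d) (φ w : ℝ → Evec d) (t : ℝ) : Evec d :=
  ∫ θ in Set.Icc (-τ) (0:ℝ), (C (s+t) θ) (if t+θ ≤ 0 then φ (t+θ) else w (t+θ))

/-- `f` belongs to the Sobolev space `H¹([0,h], ℝ^d)`. -/
def MemH1 (d : ℕ) (h : ℝ) (f : ℝ → Evec d) : Prop :=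
  ∃ (a : Evec d) (g : ℝ → Evec d),
    MemLp g 2 (volume.restrict (Set.Icc (0:ℝ) h)) ∧
    ∀ᵐ t ∂(volume.restrict (Set.Icc (0:ℝ) h)), f t = a + ∫ u in (0:ℝ)..t, g u

/-- `f` belongs to `H¹([0,h], ℝ^d)` with `H¹` norm at most `m`. -/
def H1BddBy (d : ℕ) (h : ℝ) (f : ℝ → Evec d) (m : ℝ) : Prop :=
  ∃ (a : Evec d) (g : ℝ → Evec d),
    MemLp g 2 (volume.restrict (Set.Icc (0:ℝ) h)) ∧
    (∀ᵐ t ∂(volume.restrict (Set.Icc (0:ℝ) h)), f t = a + ∫ u in (0:ℝ)..t, g u) ∧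
    (eLpNorm f 2 (volume.restrict (Set.Icc (0:ℝ) h))).toReal ^ 2 +
      (eLpNorm g 2 (volume.restrict (Set.Icc (0:ℝ) h))).toReal ^ 2 ≤ m ^ 2

/-!
For a.e. `t ∈ [0, h]` the kernel slice `C (s + t)` is essentially bounded, so the integrand
of `F V(φ, w)` splits into two integrable pieces and `F V(φ, w) = F V⁻ φ + F V⁺ w`.
Hence `w* = F V⁻ φ + F V⁺ w*` is a sum of two `H¹` functions (by the bound on `F V⁻` and by H2),
and `(I − F V⁺) w* = F V⁻ φ`, so the bound on the inverse of `(I − F V⁺)↾_{H¹}` applied to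
the `H¹` bound on `F V⁻ φ` gives the estimate.
-/

open scoped ENNReal

theorem MeasureTheory.MemLp.ae_memLp_top_prodMk_left {α β E : Type*} [MeasurableSpace α]
    [MeasurableSpace β] [NormedAddCommGroup E] {μ : Measure α} {ν : Measure β} [SFinite ν]
    {f : α × β → E} (hf : MemLp f ∞ (μ.prod ν)) :
    ∀ᵐ x ∂μ, MemLp (fun y => f (x, y)) ∞ ν := by
  have hbound : ∀ᵐ z ∂μ.prod ν, ‖f z‖ₑ ≤ eLpNormEssSup f (μ.prod ν) :=
    enorm_ae_le_eLpNormEssSup f _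
  filter_upwards [hf.1.prodMk_left, Measure.ae_ae_of_ae_prod hbound] with x hmeas hx
  refine ⟨hmeas, ?_⟩
  rw [eLpNorm_exponent_top]
  exact (eLpNormEssSup_le_of_ae_enorm_bound hx).trans_lt
    (by simpa [eLpNorm_exponent_top] using hf.2)

theorem MeasureTheory.MemLp.integrable_clm_apply {α E F : Type*} [MeasurableSpace α]
    [NormedAddCommGroup E] [NormedSpace ℝ E] [NormedAddCommGroup F] [NormedSpace ℝ F]
    {μ : Measure α} {B : α → E →L[ℝ] F} {g : α → E} (hB : MemLp B ∞ μ) (hg : Integrable g μ) :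
    Integrable (fun x => B x (g x)) μ := by
  rw [← memLp_one_iff_integrable] at hg ⊢
  exact hB.of_bilin (r := 1) (fun L v => L v) 1 hg
    (isBoundedBilinearMap_apply.continuous.comp_aestronglyMeasurable (hB.1.prodMk hg.1))
    (.of_forall fun x => by simpa using (B x).le_opNNNorm (g x))

theorem ae_restrict_Icc_comp_const_add {P : ℝ → Prop} {a b : ℝ} (s : ℝ)
    (hP : ∀ᵐ x ∂volume.restrict (Icc a b), P x) :
    ∀ᵐ t ∂volume.restrict (Icc (a - s) (b - s)), P (s + t) := by
  have hpres := (measurePreserving_add_left volume s).restrict_preimage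
    (measurableSet_Icc (a := a) (b := b))
  rw [preimage_const_add_Icc] at hpres
  exact hpres.quasiMeasurePreserving.ae hP

section

variable {d : ℕ} {τ h s : ℝ} {C : ℝ → ℝ → Mtx d}

theorem ae_memLp_top_kernel_slice
    (hH1 : MemLp (Function.uncurry C) ⊤
      (volume.restrict (Set.Icc s (s+h) ×ˢ Set.Icc (-τ) (0:ℝ)))) :
    ∀ᵐ t ∂volume.restrict (Icc 0 h), MemLp (C (s + t)) ∞ (volume.restrict (Icc (-τ) 0)) := by
  rw [Measure.volume_eq_prod, ← Measure.prod_restrict] at hH1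
  simpa only [sub_self, add_sub_cancel_left, Function.uncurry_apply_pair] using
    ae_restrict_Icc_comp_const_add s hH1.ae_memLp_top_prodMk_left

theorem FV_ae_eq_FVm_add_FVp
    (hH1 : MemLp (Function.uncurry C) ⊤
      (volume.restrict (Set.Icc s (s+h) ×ˢ Set.Icc (-τ) (0:ℝ))))
    {φ w : ℝ → Evec d} (hφ : MemLp φ 2 (volume.restrict (Icc (-τ) 0)))
    (hw : MemLp w 2 (volume.restrict (Icc 0 h))) :
    FV d τ s C φ w =ᵐ[volume.restrict (Icc 0 h)] FVm d τ s C φ + FVp d τ s C w := by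
  have hφ' : Integrable ((Icc (-τ) 0).indicator φ) :=
    (integrable_indicator_iff measurableSet_Icc).2 (hφ.integrable one_le_two)
  have hw' : Integrable ((Ioc 0 h).indicator w) :=
    (integrable_indicator_iff measurableSet_Ioc).2
      (IntegrableOn.mono_set (hw.integrable one_le_two) Ioc_subset_Icc_self)
  filter_upwards [ae_memLp_top_kernel_slice hH1, ae_restrict_mem measurableSet_Icc]
    with t hC ⟨ht0, hth⟩
  have hm : IntegrableOn (fun θ => C (s+t) θ (if t+θ ≤ 0 then φ (t+θ) else 0)) (Icc (-τ) 0) := by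
    refine IntegrableOn.congr_fun (hC.integrable_clm_apply (hφ'.comp_add_left t).restrict)
      (fun θ hθ => ?_) measurableSet_Icc
    have hmem : t + θ ∈ Icc (-τ) 0 ↔ t + θ ≤ 0 :=
      ⟨And.right, fun hle => ⟨by linarith [hθ.1], hle⟩⟩
    simp only [indicator, hmem]
  have hp : IntegrableOn (fun θ => C (s+t) θ (if 0 < t+θ then w (t+θ) else 0)) (Icc (-τ) 0) := by
    refine IntegrableOn.congr_fun (hC.integrable_clm_apply (hw'.comp_add_left t).restrict)
      (fun θ hθ => ?_) measurableSet_Icc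
    have hmem : t + θ ∈ Ioc 0 h ↔ 0 < t + θ :=
      ⟨And.left, fun hpos => ⟨hpos, by linarith [hθ.2]⟩⟩
    simp only [indicator, hmem]
  simp only [FV, FVm, FVp, Pi.add_apply]
  rw [← integral_add hm hp]
  congr 1
  funext θ
  split_ifs <;> first | (exfalso; linarith) | simp

theorem H1BddBy.memH1 {f : ℝ → Evec d} {m : ℝ} (hf : H1BddBy d h f m) : MemH1 d h f :=
  let ⟨a, g, hg, hfg, _⟩ := hf
  ⟨a, g, hg, hfg⟩

theorem MemH1.congr_ae {f g : ℝ → Evec d} (hf : MemH1 d h f)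
    (hgf : g =ᵐ[volume.restrict (Icc 0 h)] f) : MemH1 d h g :=
  let ⟨a, f', hf', hff'⟩ := hf
  ⟨a, f', hf', hgf.trans hff'⟩

theorem MemH1.add {f g : ℝ → Evec d} (hf : MemH1 d h f) (hg : MemH1 d h g) :
    MemH1 d h (f + g) := by
  obtain ⟨a, f', hf', hff'⟩ := hf
  obtain ⟨b, g', hg', hgg'⟩ := hg
  refine ⟨a + b, f' + g', hf'.add hg', ?_⟩
  filter_upwards [hff', hgg', ae_restrict_mem measurableSet_Icc] with t hft hgt ht
  have hsub : uIcc 0 t ⊆ Icc 0 h := by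
    rw [uIcc_of_le ht.1]
    exact Icc_subset_Icc_right ht.2
  have hf'_int : IntervalIntegrable f' volume 0 t :=
    (IntegrableOn.mono_set (hf'.integrable one_le_two) hsub).intervalIntegrable
  have hg'_int : IntervalIntegrable g' volume 0 t :=
    (IntegrableOn.mono_set (hg'.integrable one_le_two) hsub).intervalIntegrable
  simp only [Pi.add_apply]
  rw [hft, hgt, intervalIntegral.integral_add hf'_int hg'_int]
  abel

end

theorem fixed_point_in_H1_general
    (d : ℕ) (τ h s : ℝ)
    (C : ℝ → ℝ → Mtx d)
    -- Hypothesis H1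
    (hH1 : MemLp (Function.uncurry C) ⊤
      (volume.restrict (Set.Icc s (s+h) ×ˢ Set.Icc (-τ) (0:ℝ))))
    -- Hypothesis H2
    (hH2 : ∃ b : ℝ, ∀ w : ℝ → Evec d,
      MemLp w 2 (volume.restrict (Set.Icc (0:ℝ) h)) →
      H1BddBy d h (FVp d τ s C w)
        (b * (eLpNorm w 2 (volume.restrict (Set.Icc (0:ℝ) h))).toReal))
    -- c₁ bounds the inverse of (I − F V⁺)↾_{H¹} on H¹
    (c₁ : ℝ)
    (hc₁ : ∀ (w f : ℝ → Evec d) (m : ℝ), MemH1 d h w →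
      ((fun t => w t - FVp d τ s C w t) =ᵐ[volume.restrict (Set.Icc (0:ℝ) h)] f) →
      H1BddBy d h f m → H1BddBy d h w (c₁ * m))
    -- c₂ bounds F V⁻ : X → H¹
    (c₂ : ℝ)
    (hc₂ : ∀ φ : ℝ → Evec d,
      MemLp φ 2 (volume.restrict (Set.Icc (-τ) (0:ℝ))) →
      H1BddBy d h (FVm d τ s C φ)
        (c₂ * (eLpNorm φ 2 (volume.restrict (Set.Icc (-τ) (0:ℝ)))).toReal))
    -- φ ∈ X and w* is the solution of the fixed point equation w = F V(φ, w)
    (φ : ℝ → Evec d)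
    (hφ : MemLp φ 2 (volume.restrict (Set.Icc (-τ) (0:ℝ))))
    (wstar : ℝ → Evec d)
    (hwstar₁ : MemLp wstar 2 (volume.restrict (Set.Icc (0:ℝ) h)))
    (hwstar₂ : wstar =ᵐ[volume.restrict (Set.Icc (0:ℝ) h)] FV d τ s C φ wstar) :
    MemH1 d h wstar ∧
    H1BddBy d h wstar
      (c₁ * c₂ * (eLpNorm φ 2 (volume.restrict (Set.Icc (-τ) (0:ℝ)))).toReal) := by
  have hfix : wstar =ᵐ[volume.restrict (Icc 0 h)] FVm d τ s C φ + FVp d τ s C wstar :=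
    hwstar₂.trans (FV_ae_eq_FVm_add_FVp hH1 hφ hwstar₁)
  obtain ⟨b, hb⟩ := hH2
  have hmem : MemH1 d h wstar :=
    ((hc₂ φ hφ).memH1.add (hb wstar hwstar₁).memH1).congr_ae hfix
  have hresidual : (fun t => wstar t - FVp d τ s C wstar t)
      =ᵐ[volume.restrict (Icc 0 h)] FVm d τ s C φ := by
    filter_upwards [hfix] with t ht
    rw [ht, Pi.add_apply, add_sub_cancel_right]
  rw [mul_assoc]
  exact ⟨hmem, hc₁ wstar _ _ hmem hresidual (hc₂ φ hφ)⟩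

/-- Assume H1, H2 and H3, and let `φ ∈ X`. Then the unique solution
`w* ∈ X⁺` of the fixed point equation `w = F V(φ, w)` belongs to `H¹`, and
`‖w*‖_{H¹} ≤ ‖((I − F V⁺)↾_{H¹})^{−1}‖_{H¹←H¹} · ‖F V⁻‖_{H¹←X} · ‖φ‖_X`
(for any constants `c₁`, `c₂` bounding, respectively, the inverse of `(I − F V⁺)↾_{H¹}`
as an operator on `H¹` and `F V⁻` as an operator from `X` to `H¹`). -/
theorem fixed_point_in_H1
    (d : ℕ) (hd : 0 < d) (τ h s : ℝ) (hτ : 0 < τ) (hh : 0 < h)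
    (C : ℝ → ℝ → Mtx d)
    (hCmeas : StronglyMeasurable (Function.uncurry C))
    -- Hypothesis H1
    (hH1 : MemLp (Function.uncurry C) ⊤
      (volume.restrict (Set.Icc s (s+h) ×ˢ Set.Icc (-τ) (0:ℝ))))
    -- Hypothesis H2
    (hH2 : ∃ b : ℝ, ∀ w : ℝ → Evec d,
      MemLp w 2 (volume.restrict (Set.Icc (0:ℝ) h)) →
      H1BddBy d h (FVp d τ s C w)
        (b * (eLpNorm w 2 (volume.restrict (Set.Icc (0:ℝ) h))).toReal))
    -- Hypothesis H3
    (hH3 : ∃ b : ℝ, ∀ φ : ℝ → Evec d,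
      MemLp φ 2 (volume.restrict (Set.Icc (-τ) (0:ℝ))) →
      H1BddBy d h (FVm d τ s C φ)
        (b * (eLpNorm φ 2 (volume.restrict (Set.Icc (-τ) (0:ℝ)))).toReal))
    -- c₁ bounds the inverse of (I − F V⁺)↾_{H¹} on H¹
    (c₁ : ℝ)
    (hc₁ : ∀ (w f : ℝ → Evec d) (m : ℝ), MemH1 d h w →
      ((fun t => w t - FVp d τ s C w t) =ᵐ[volume.restrict (Set.Icc (0:ℝ) h)] f) →
      H1BddBy d h f m → H1BddBy d h w (c₁ * m))
    -- c₂ bounds F V⁻ : X → H¹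
    (c₂ : ℝ)
    (hc₂ : ∀ φ : ℝ → Evec d,
      MemLp φ 2 (volume.restrict (Set.Icc (-τ) (0:ℝ))) →
      H1BddBy d h (FVm d τ s C φ)
        (c₂ * (eLpNorm φ 2 (volume.restrict (Set.Icc (-τ) (0:ℝ)))).toReal))
    -- φ ∈ X and w* is the solution of the fixed point equation w = F V(φ, w)
    (φ : ℝ → Evec d)
    (hφ : MemLp φ 2 (volume.restrict (Set.Icc (-τ) (0:ℝ))))
    (wstar : ℝ → Evec d)
    (hwstar₁ : MemLp wstar 2 (volume.restrict (Set.Icc (0:ℝ) h)))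
    (hwstar₂ : wstar =ᵐ[volume.restrict (Set.Icc (0:ℝ) h)] FV d τ s C φ wstar) :
    MemH1 d h wstar ∧
    H1BddBy d h wstar
      (c₁ * c₂ * (eLpNorm φ 2 (volume.restrict (Set.Icc (-τ) (0:ℝ)))).toReal) :=
  fixed_point_in_H1_general d τ h s C hH1 hH2 c₁ hc₁ c₂ hc₂ φ hφ wstar hwstar₁ hwstar₂
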